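/- arXiv:1506.06609 — 3 statements merged into one kernel-verified Lean document; each statement's English description precedes it below -/
import Mathlib

section
/- Let f : ℤ → ℂ be finitely supported and α, β ∈ ℝ. Then (i) W_+^{α+β} f = W_+^α (W_+^β f); (ii) W_−^{α+β} f = W_−^α (W_−^β f); (iii) for every n ∈ ℤ, W_+^α f(n) → f(n) and W_−^α f(n) → f(n) as α → 0. -/
open scoped BigOperators

/-- The Cesàro kernel `k^α(n) = α(α+1)⋯(α+n−1)/n!`, with `k^α(0) = 1`. -/
noncomputable def cesaroKernel (α : ℝ) (n : ℕ) : ℝ :=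
  (∏ i ∈ Finset.range n, (α + i)) / (Nat.factorial n)

/-- The Weyl sum `W_+^{−β} f(n) = ∑_{j=n}^{∞} k^β(j−n) f(j)` (as a `tsum`). -/
noncomputable def weylSumPlus (β : ℝ) (f : ℤ → ℂ) (n : ℤ) : ℂ :=
  ∑' j : ℤ, if n ≤ j then (cesaroKernel β (j - n).toNat : ℂ) * f j else 0

/-- The Weyl sum `W_−^{−β} f(n) = ∑_{j=−∞}^{n} k^β(n−j) f(j)` (as a `tsum`). -/
noncomputable def weylSumMinus (β : ℝ) (f : ℤ → ℂ) (n : ℤ) : ℂ :=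
  ∑' j : ℤ, if j ≤ n then (cesaroKernel β (n - j).toNat : ℂ) * f j else 0

/-- The Weyl difference `W_+^α f(n)`.  For `α > 0` it is
`(−1)^m Δ^m (W_+^{−(m−α)} f)(n)` with `m = ⌊α⌋ + 1`; `W_+^0 f = f`
(so is the `α ≤ 0` branch, since `k^0(0) = 1` and `k^0(n) = 0` for `n ≥ 1`),
and for `α < 0` it is the Weyl sum of order `−α`. -/
noncomputable def weylPlus (α : ℝ) (f : ℤ → ℂ) (n : ℤ) : ℂ :=
  if α ≤ 0 then weylSumPlus (-α) f n
  else ∑ j ∈ Finset.range (⌊α⌋₊ + 2),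
    ((-1 : ℂ) ^ j * (Nat.choose (⌊α⌋₊ + 1) j : ℂ)) * weylSumPlus ((⌊α⌋₊ + 1 : ℝ) - α) f (n + j)

/-- The Weyl difference `W_−^α f(n)`.  For `α > 0` it is
`∇^m (W_−^{−(m−α)} f)(n)` with `m = ⌊α⌋ + 1`; `W_−^0 f = f`,
and for `α < 0` it is the Weyl sum of order `−α`. -/
noncomputable def weylMinus (α : ℝ) (f : ℤ → ℂ) (n : ℤ) : ℂ :=
  if α ≤ 0 then weylSumMinus (-α) f n
  else ∑ j ∈ Finset.range (⌊α⌋₊ + 2),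
    ((-1 : ℂ) ^ j * (Nat.choose (⌊α⌋₊ + 1) j : ℂ)) * weylSumMinus ((⌊α⌋₊ + 1 : ℝ) - α) f (n - j)

/-- `W^α f(n) = W_+^α f(n)` for `n ≥ 0` and `W_−^α f(n)` for `n < 0`. -/
noncomputable def weyl (α : ℝ) (f : ℤ → ℂ) (n : ℤ) : ℂ :=
  if 0 ≤ n then weylPlus α f n else weylMinus α f n

lemma cesaroKernel_zero (α : ℝ) : cesaroKernel α 0 = 1 := by simp [cesaroKernel]

lemma cesaroKernel_zero_left (m : ℕ) : cesaroKernel 0 (m+1) = 0 := by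
  unfold cesaroKernel
  rw [Finset.prod_eq_zero (Finset.mem_range.mpr (Nat.succ_pos m)) (by simp)]
  simp

lemma succ_mul_kernel (γ : ℝ) (n : ℕ) :
    ((n:ℝ)+1) * cesaroKernel γ (n+1) = (γ + n) * cesaroKernel γ n := by
  unfold cesaroKernel
  rw [Finset.prod_range_succ, Nat.factorial_succ]
  have h1 : (Nat.factorial n : ℝ) ≠ 0 := Nat.cast_ne_zero.mpr (Nat.factorial_ne_zero n)
  have h2 : ((n:ℝ)+1) ≠ 0 := by positivity
  push_cast
  field_simp

lemma kernel_shift (γ : ℝ) (n : ℕ) :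
    cesaroKernel (γ-1) (n+1) = (γ-1) / ((n:ℝ)+1) * cesaroKernel γ n := by
  unfold cesaroKernel
  rw [Finset.prod_range_succ', Nat.factorial_succ]
  have h1 : (Nat.factorial n : ℝ) ≠ 0 := Nat.cast_ne_zero.mpr (Nat.factorial_ne_zero n)
  have h2 : ((n:ℝ)+1) ≠ 0 := by positivity
  have h3 : ∀ i : ℕ, γ - 1 + ((i:ℝ)+1) = γ + i := by intro i; ring
  push_cast
  simp only [h3]
  field_simp
  ring

lemma kernel_step (γ : ℝ) (n : ℕ) :
    cesaroKernel γ (n+1) - cesaroKernel γ n = cesaroKernel (γ-1) (n+1) := by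
  have h2 : ((n:ℝ)+1) ≠ 0 := by positivity
  have h := succ_mul_kernel γ n
  rw [kernel_shift]
  field_simp
  linarith [h]

lemma kernel_conv (α β : ℝ) (n : ℕ) :
    ∑ m ∈ Finset.range (n+1), cesaroKernel α m * cesaroKernel β (n - m)
      = cesaroKernel (α+β) n := by
  induction n with
  | zero => simp [cesaroKernel]
  | succ n ih =>
    have h2 : ((n:ℝ)+1) ≠ 0 := by positivity
    apply mul_left_cancel₀ h2
    calc ((n:ℝ)+1) * ∑ m ∈ Finset.range (n+2), cesaroKernel α m * cesaroKernel β (n+1 - m)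
        = ∑ m ∈ Finset.range (n+2), ((m:ℝ) * (cesaroKernel α m * cesaroKernel β (n+1-m))
            + ((n+1-m : ℕ):ℝ) * (cesaroKernel α m * cesaroKernel β (n+1-m))) := by
          rw [Finset.mul_sum]
          refine Finset.sum_congr rfl (fun m hm => ?_)
          have hm' : m ≤ n + 1 := by
            have := Finset.mem_range.mp hm; omega
          have : ((n+1-m : ℕ):ℝ) = (n:ℝ) + 1 - m := by
            push_cast [Nat.cast_sub hm']; ring
          rw [this]; ring
      _ = ((α+β+n) : ℝ) * cesaroKernel (α+β) n := by
          rw [Finset.sum_add_distrib]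
          have hA : ∑ m ∈ Finset.range (n+2), (m:ℝ) * (cesaroKernel α m * cesaroKernel β (n+1-m))
              = ∑ m ∈ Finset.range (n+1), (α+m) * (cesaroKernel α m * cesaroKernel β (n-m)) := by
            rw [Finset.sum_range_succ']
            simp only [Nat.cast_zero, zero_mul, add_zero]
            refine Finset.sum_congr rfl (fun m hm => ?_)
            have h1 : n + 1 - (m+1) = n - m := by omega
            rw [h1]
            have := succ_mul_kernel α m
            push_cast
            linear_combination this * cesaroKernel β (n - m)
          have hB : ∑ m ∈ Finset.range (n+2), ((n+1-m : ℕ):ℝ) * (cesaroKernel α m * cesaroKernel β (n+1-m))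
              = ∑ m ∈ Finset.range (n+1), ((β:ℝ)+(n-m:ℕ)) * (cesaroKernel α m * cesaroKernel β (n-m)) := by
            rw [Finset.sum_range_succ]
            simp only [Nat.sub_self, Nat.cast_zero, zero_mul, add_zero]
            refine Finset.sum_congr rfl (fun m hm => ?_)
            have hm' : m ≤ n := by have := Finset.mem_range.mp hm; omega
            have h1 : n + 1 - m = (n - m) + 1 := by omega
            rw [h1]
            have := succ_mul_kernel β (n-m)
            have h3 : ((n - m + 1 : ℕ):ℝ) = ((n-m:ℕ):ℝ) + 1 := by push_cast; ring
            rw [h3]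
            linear_combination cesaroKernel α m * this
          rw [hA, hB, ← Finset.sum_add_distrib, ← ih, Finset.mul_sum]
          refine Finset.sum_congr rfl (fun m hm => ?_)
          have hm' : m ≤ n := by have := Finset.mem_range.mp hm; omega
          have : ((n-m:ℕ):ℝ) = (n:ℝ) - m := by push_cast [Nat.cast_sub hm']; ring
          rw [this]; ring
      _ = ((n:ℝ)+1) * cesaroKernel (α+β) (n+1) := by rw [succ_mul_kernel]

lemma weylSumPlus_eq_sum (γ : ℝ) (g : ℤ → ℂ) (N : ℤ) (hN : ∀ j, N < j → g j = 0) (n : ℤ) :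
    weylSumPlus γ g n = ∑ j ∈ Finset.Icc n N, (cesaroKernel γ (j - n).toNat : ℂ) * g j := by
  rw [weylSumPlus, tsum_eq_sum (s := Finset.Icc n N) ?_]
  · exact Finset.sum_congr rfl fun j hj => if_pos (Finset.mem_Icc.mp hj).1
  · intro j hj
    split_ifs with h
    · rw [hN j (by simp [Finset.mem_Icc] at hj; omega), mul_zero]
    · rfl

lemma weylSumPlus_bdd (γ : ℝ) (g : ℤ → ℂ) (N : ℤ) (hN : ∀ j, N < j → g j = 0)
    (n : ℤ) (hn : N < n) : weylSumPlus γ g n = 0 := by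
  rw [weylSumPlus_eq_sum γ g N hN, Finset.Icc_eq_empty (by omega), Finset.sum_empty]

lemma weylSumPlus_step (γ : ℝ) (g : ℤ → ℂ) (N : ℤ) (hN : ∀ j, N < j → g j = 0) (n : ℤ) :
    weylSumPlus γ g n - weylSumPlus γ g (n+1) = weylSumPlus (γ-1) g n := by
  rw [weylSumPlus_eq_sum γ g N hN, weylSumPlus_eq_sum γ g N hN, weylSumPlus_eq_sum (γ-1) g N hN]
  rcases le_or_gt n N with h | h
  · have hIcc : Finset.Icc n N = insert n (Finset.Icc (n+1) N) := by
      ext x; simp [Finset.mem_Icc, Finset.mem_insert]; omega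
    have hnot : n ∉ Finset.Icc (n+1) N := by simp [Finset.mem_Icc]
    rw [hIcc, Finset.sum_insert hnot, Finset.sum_insert hnot]
    simp only [sub_self, Int.toNat_zero, cesaroKernel_zero, Complex.ofReal_one, one_mul]
    rw [add_sub_assoc, ← Finset.sum_sub_distrib]
    congr 1
    refine Finset.sum_congr rfl fun j hj => ?_
    have hj' : n + 1 ≤ j := (Finset.mem_Icc.mp hj).1
    have h1 : (j - n).toNat = (j - (n+1)).toNat + 1 := by omega
    rw [h1, ← sub_mul]
    congr 1
    have := kernel_step γ (j - (n+1)).toNat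
    push_cast [← this]
    ring
  · rw [Finset.Icc_eq_empty (by omega : ¬ n ≤ N),
      Finset.Icc_eq_empty (by omega : ¬ n + 1 ≤ N)]
    simp

lemma alt_sum (h : ℤ → ℂ) (m : ℕ) (n : ℤ) :
    ∑ j ∈ Finset.range (m+2), ((-1:ℂ)^j * (Nat.choose (m+1) j : ℂ)) * h (n + j)
      = ∑ j ∈ Finset.range (m+1), ((-1:ℂ)^j * (Nat.choose m j : ℂ)) * (h (n + j) - h (n + j + 1)) := by
  rw [Finset.sum_range_succ' (fun j => ((-1:ℂ)^j * (Nat.choose (m+1) j : ℂ)) * h (n + j))]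
  simp only [Nat.choose_succ_succ, Nat.cast_add, pow_succ]
  have expand : ∑ i ∈ Finset.range (m+1),
      ((-1:ℂ)^i * (-1) * (((Nat.choose m i : ℂ)) + (Nat.choose m (i+1) : ℂ))) * h (n + (i+1))
      = (∑ i ∈ Finset.range (m+1), -(((-1:ℂ)^i * (Nat.choose m i : ℂ)) * h (n + i + 1)))
        + (∑ i ∈ Finset.range (m+1), -(((-1:ℂ)^i * (Nat.choose m (i+1) : ℂ)) * h (n + i + 1))) := by
    rw [← Finset.sum_add_distrib]
    refine Finset.sum_congr rfl fun i _ => ?_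
    have : n + ((i : ℤ)+1) = n + i + 1 := by ring
    rw [this]; ring
  simp only [Nat.succ_eq_add_one, Nat.cast_one, Nat.cast_zero, add_zero, pow_zero,
    Nat.choose_zero_right, one_mul]
  rw [expand]
  have third : ∑ i ∈ Finset.range (m+1), -(((-1:ℂ)^i * (Nat.choose m (i+1) : ℂ)) * h (n + i + 1))
      = ∑ j ∈ Finset.range (m+1), ((-1:ℂ)^j * (Nat.choose m j : ℂ)) * h (n + j) - h n := by
    rw [Finset.sum_range_succ]
    have h0 : (Nat.choose m (m+1) : ℂ) = 0 := by simp
    rw [h0]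
    simp only [mul_zero, zero_mul, neg_zero, add_zero]
    rw [Finset.sum_range_succ' (fun j => ((-1:ℂ)^j * (Nat.choose m j : ℂ)) * h (n + j))]
    simp only [pow_zero, Nat.choose_zero_right, Nat.cast_one, one_mul, Nat.cast_zero, add_zero]
    rw [add_sub_cancel_right]
    refine Finset.sum_congr rfl fun i _ => ?_
    have h1 : n + ((i+1:ℕ):ℤ) = n + i + 1 := by push_cast; ring
    rw [h1, pow_succ]
    ring
  rw [third]
  simp only [mul_sub, Finset.sum_sub_distrib, Finset.sum_neg_distrib]
  abel

lemma diff_pow (g : ℤ → ℂ) (N : ℤ) (hN : ∀ j, N < j → g j = 0) (m : ℕ) :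
    ∀ (γ : ℝ) (n : ℤ),
    ∑ j ∈ Finset.range (m+1), ((-1:ℂ)^j * (Nat.choose m j : ℂ)) * weylSumPlus γ g (n + j)
      = weylSumPlus (γ - m) g n := by
  induction m with
  | zero => intro γ n; simp
  | succ m ih =>
    intro γ n
    rw [show m + 1 + 1 = m + 2 from rfl, alt_sum (weylSumPlus γ g) m n]
    have h1 : ∀ j ∈ Finset.range (m+1),
        ((-1:ℂ)^j * (Nat.choose m j : ℂ)) * (weylSumPlus γ g (n+j) - weylSumPlus γ g (n+j+1))
        = ((-1:ℂ)^j * (Nat.choose m j : ℂ)) * weylSumPlus (γ-1) g (n+j) := by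
      intro j _
      rw [weylSumPlus_step γ g N hN (n+j)]
    rw [Finset.sum_congr rfl h1, ih (γ-1) n]
    congr 1
    push_cast
    ring

lemma weylPlus_eq (α : ℝ) (g : ℤ → ℂ) (N : ℤ) (hN : ∀ j, N < j → g j = 0) (n : ℤ) :
    weylPlus α g n = weylSumPlus (-α) g n := by
  rw [weylPlus]
  split_ifs with h
  · rfl
  · rw [show ⌊α⌋₊ + 2 = (⌊α⌋₊ + 1) + 1 from rfl,
      diff_pow g N hN (⌊α⌋₊ + 1) ((⌊α⌋₊ + 1 : ℝ) - α) n]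
    congr 1
    push_cast
    ring

lemma Icc_filter_le (n N i : ℤ) (hi : n ≤ i) :
    (Finset.Icc n N).filter (fun j => i ≤ j) = Finset.Icc i N := by
  ext x; simp only [Finset.mem_Icc, Finset.mem_filter]; omega

lemma Icc_filter_ge (n N j : ℤ) (hj : j ≤ N) :
    (Finset.Icc n N).filter (fun i => i ≤ j) = Finset.Icc n j := by
  ext x; simp only [Finset.mem_Icc, Finset.mem_filter]; omega

lemma kernel_conv_Icc (γ δ : ℝ) (n j : ℤ) :
    ∑ i ∈ Finset.Icc n j, cesaroKernel γ (i-n).toNat * cesaroKernel δ (j-i).toNat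
      = if n ≤ j then cesaroKernel (γ+δ) (j-n).toNat else 0 := by
  split_ifs with h
  · have himg : Finset.Icc n j = Finset.image (fun m : ℕ => n + m) (Finset.range ((j-n).toNat + 1)) := by
      ext x
      simp only [Finset.mem_Icc, Finset.mem_image, Finset.mem_range]
      constructor
      · intro hx; exact ⟨(x-n).toNat, by omega, by omega⟩
      · rintro ⟨m, hm, rfl⟩; omega
    rw [himg, Finset.sum_image (by intro a _ b _ hab; have hab' : n + (a:ℤ) = n + b := hab; omega), ← kernel_conv γ δ (j-n).toNat]
    refine Finset.sum_congr rfl fun m hm => ?_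
    have hm' : m ≤ (j-n).toNat := by simp only [Finset.mem_range] at hm; omega
    have e1 : (n + (m:ℤ) - n).toNat = m := by omega
    have e2 : (j - (n + (m:ℤ))).toNat = (j-n).toNat - m := by omega
    rw [e1, e2]
  · rw [Finset.Icc_eq_empty (by omega), Finset.sum_empty]

lemma weylSumPlus_comp (γ δ : ℝ) (g : ℤ → ℂ) (N : ℤ) (hN : ∀ j, N < j → g j = 0) (n : ℤ) :
    weylSumPlus γ (weylSumPlus δ g) n = weylSumPlus (γ + δ) g n := by
  have hG : ∀ j, N < j → weylSumPlus δ g j = 0 := fun j hj => weylSumPlus_bdd δ g N hN j hj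
  rw [weylSumPlus_eq_sum γ _ N hG n, weylSumPlus_eq_sum (γ+δ) g N hN n]
  have h1 : ∀ i ∈ Finset.Icc n N,
      (cesaroKernel γ (i-n).toNat : ℂ) * weylSumPlus δ g i
      = ∑ j ∈ Finset.Icc n N, (if i ≤ j then
          (cesaroKernel γ (i-n).toNat : ℂ) * ((cesaroKernel δ (j-i).toNat : ℂ) * g j) else 0) := by
    intro i hi
    rw [weylSumPlus_eq_sum δ g N hN i, Finset.mul_sum, ← Finset.sum_filter,
        Icc_filter_le n N i (Finset.mem_Icc.mp hi).1]
  rw [Finset.sum_congr rfl h1, Finset.sum_comm]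
  refine Finset.sum_congr rfl fun j hj => ?_
  rw [← Finset.sum_filter, Icc_filter_ge n N j (Finset.mem_Icc.mp hj).2]
  have h2 : ∑ i ∈ Finset.Icc n j, (cesaroKernel γ (i-n).toNat : ℂ) * ((cesaroKernel δ (j-i).toNat : ℂ) * g j)
      = (∑ i ∈ Finset.Icc n j, ((cesaroKernel γ (i-n).toNat * cesaroKernel δ (j-i).toNat : ℝ) : ℂ)) * g j := by
    rw [Finset.sum_mul]
    refine Finset.sum_congr rfl fun i _ => ?_
    push_cast; ring
  rw [h2]
  congr 1
  have := kernel_conv_Icc γ δ n j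
  rw [if_pos (Finset.mem_Icc.mp hj).1] at this
  rw [← this]
  norm_cast

lemma weylSumMinus_reflect (γ : ℝ) (f : ℤ → ℂ) (n : ℤ) :
    weylSumMinus γ f n = weylSumPlus γ (fun j => f (-j)) (-n) := by
  rw [weylSumMinus, weylSumPlus,
    ← (Equiv.neg ℤ).tsum_eq (fun j => if -n ≤ j then ((cesaroKernel γ (j - -n).toNat : ℝ):ℂ) * f (-j) else 0)]
  refine tsum_congr fun j => ?_
  simp only [Equiv.neg_apply, neg_neg]
  by_cases h : j ≤ n
  · rw [if_pos h, if_pos (by omega)]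
    congr 3
    omega
  · rw [if_neg h, if_neg (by omega)]

lemma weylMinus_reflect (α : ℝ) (f : ℤ → ℂ) (n : ℤ) :
    weylMinus α f n = weylPlus α (fun j => f (-j)) (-n) := by
  rw [weylMinus, weylPlus]
  split_ifs with h
  · exact weylSumMinus_reflect _ f n
  · refine Finset.sum_congr rfl fun j _ => ?_
    rw [weylSumMinus_reflect, show -(n - (j:ℤ)) = -n + j from by ring]

lemma weylPlus_comp (α β : ℝ) (g : ℤ → ℂ) (N : ℤ) (hN : ∀ j, N < j → g j = 0) (n : ℤ) :
    weylPlus (α + β) g n = weylPlus α (weylPlus β g) n := by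
  have hG : ∀ j, N < j → weylPlus β g j = 0 := by
    intro j hj
    rw [weylPlus_eq β g N hN j]
    exact weylSumPlus_bdd (-β) g N hN j hj
  rw [weylPlus_eq (α+β) g N hN n, weylPlus_eq α (weylPlus β g) N hG n]
  have : weylPlus β g = weylSumPlus (-β) g := funext fun j => weylPlus_eq β g N hN j
  rw [this, weylSumPlus_comp (-α) (-β) g N hN n]
  ring_nf

lemma kernel_cont (k : ℕ) : Continuous (fun γ : ℝ => cesaroKernel γ k) := by
  unfold cesaroKernel
  apply Continuous.div_const
  exact continuous_finset_prod _ fun i _ => by continuity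

lemma tendsto_plus (f : ℤ → ℂ) (N : ℤ) (hN : ∀ j, N < j → f j = 0) (n : ℤ) :
    Filter.Tendsto (fun γ : ℝ => weylPlus γ f n) (nhds 0) (nhds (f n)) := by
  have heq : (fun γ : ℝ => weylPlus γ f n)
      = fun γ : ℝ => ∑ j ∈ Finset.Icc n N, (cesaroKernel (-γ) (j - n).toNat : ℂ) * f j := by
    funext γ
    rw [weylPlus_eq γ f N hN n, weylSumPlus_eq_sum (-γ) f N hN n]
  rw [heq]
  have hcont : Continuous (fun γ : ℝ => ∑ j ∈ Finset.Icc n N, (cesaroKernel (-γ) (j - n).toNat : ℂ) * f j) := by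
    apply continuous_finset_sum
    intro j _
    apply Continuous.mul _ continuous_const
    exact Complex.continuous_ofReal.comp ((kernel_cont _).comp continuous_neg)
  have hval : ∑ j ∈ Finset.Icc n N, (cesaroKernel (-(0:ℝ)) (j - n).toNat : ℂ) * f j = f n := by
    rcases le_or_gt n N with h | h
    · rw [Finset.sum_eq_single n]
      · simp [cesaroKernel_zero]
      · intro j hj hjn
        have hj' : n ≤ j ∧ j ≤ N := Finset.mem_Icc.mp hj
        have : ∃ m : ℕ, (j - n).toNat = m + 1 := ⟨(j - n - 1).toNat, by omega⟩
        obtain ⟨m, hm⟩ := this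
        rw [hm, neg_zero, cesaroKernel_zero_left]
        simp
      · intro hn; exact absurd (Finset.mem_Icc.mpr ⟨le_refl n, h⟩) hn
    · rw [Finset.Icc_eq_empty (by omega), Finset.sum_empty, hN n h]
  have := hcont.tendsto 0
  rwa [hval] at this

/-- **Proposition 2.2.** For finitely supported `f : ℤ → ℂ` and `α, β ∈ ℝ`:
(i) `W_+^{α+β} f = W_+^α W_+^β f`; (ii) `W_−^{α+β} f = W_−^α W_−^β f`;
(iii) `W_+^α f(n) → f(n)` and `W_−^α f(n) → f(n)` as `α → 0`. -/
theorem weyl_add_comp_and_tendsto_zero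
    (f : ℤ → ℂ) (hf : (Function.support f).Finite) (α β : ℝ) :
    (∀ n : ℤ, weylPlus (α + β) f n = weylPlus α (weylPlus β f) n) ∧
    (∀ n : ℤ, weylMinus (α + β) f n = weylMinus α (weylMinus β f) n) ∧
    (∀ n : ℤ,
      Filter.Tendsto (fun γ : ℝ => weylPlus γ f n) (nhds 0) (nhds (f n)) ∧
      Filter.Tendsto (fun γ : ℝ => weylMinus γ f n) (nhds 0) (nhds (f n))) := by
  obtain ⟨A, hA⟩ : ∃ A : ℤ, ∀ j, A < j → f j = 0 := by
    obtain ⟨A, hA⟩ := hf.bddAbove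
    exact ⟨A, fun j hj => by
      by_contra hc
      exact absurd (hA (Function.mem_support.mpr hc)) (by omega)⟩
  obtain ⟨B, hB⟩ : ∃ B : ℤ, ∀ j, B < j → f (-j) = 0 := by
    obtain ⟨B, hB⟩ := hf.bddBelow
    refine ⟨-B, fun j hj => ?_⟩
    by_contra hc
    have := hB (Function.mem_support.mpr hc)
    omega
  refine ⟨fun n => weylPlus_comp α β f A hA n, fun n => ?_, fun n => ?_⟩
  · rw [weylMinus_reflect (α+β) f n, weylMinus_reflect α (weylMinus β f) n]
    have h1 : (fun j => weylMinus β f (-j)) = weylPlus β (fun j => f (-j)) := by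
      funext j
      rw [weylMinus_reflect β f (-j), neg_neg]
    rw [h1, ← weylPlus_comp α β (fun j => f (-j)) B hB (-n)]
  · constructor
    · exact tendsto_plus f A hA n
    · have h1 : (fun γ : ℝ => weylMinus γ f n) = fun γ : ℝ => weylPlus γ (fun j => f (-j)) (-n) := by
        funext γ; exact weylMinus_reflect γ f n
      rw [h1]
      have := tendsto_plus (fun j => f (-j)) B hB (-n)
      simpa using this
end

section
/- Let 0 < α < β. Then for every finitely supported f : ℤ → ℂ, q_α(f) ≤ q_β(f); moreover q_0(f) = ‖f‖_{ℓ¹(ℤ)} ≤ q_α(f). -/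
open scoped BigOperators

/-- `q_α(f) = ∑_{n ∈ ℤ} k^{α+1}(|n|) |W^α f(n)|`. -/
noncomputable def qNorm (α : ℝ) (f : ℤ → ℂ) : ℝ :=
  ∑' n : ℤ, cesaroKernel (α + 1) n.natAbs * ‖weyl α f n‖

lemma cesaro_zero (a : ℝ) : cesaroKernel a 0 = 1 := by
  simp [cesaroKernel]

lemma cesaro_rec (a : ℝ) (n : ℕ) :
    (n + 1 : ℝ) * cesaroKernel a (n + 1) = (a + n) * cesaroKernel a n := by
  have h1 : (Nat.factorial (n+1) : ℝ) = (n+1) * Nat.factorial n := by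
    push_cast [Nat.factorial_succ]; ring
  have h2 : (Nat.factorial n : ℝ) ≠ 0 := Nat.cast_ne_zero.2 (Nat.factorial_ne_zero n)
  have h3 : (n + 1 : ℝ) ≠ 0 := by positivity
  rw [cesaroKernel, cesaroKernel, Finset.prod_range_succ, h1]
  field_simp

lemma cesaro_nonneg {a : ℝ} (ha : 0 ≤ a) (n : ℕ) : 0 ≤ cesaroKernel a n := by
  apply div_nonneg _ (by positivity)
  exact Finset.prod_nonneg fun i _ => by positivity

lemma cesaro_vandermonde (a b : ℝ) :
    ∀ n : ℕ, ∑ i ∈ Finset.range (n+1), cesaroKernel a i * cesaroKernel b (n - i)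
      = cesaroKernel (a + b) n := by
  intro n
  induction n with
  | zero => simp [cesaro_zero]
  | succ n ih =>
    have h3 : (n + 1 : ℝ) ≠ 0 := by positivity
    have key : (n + 1 : ℝ) * ∑ i ∈ Finset.range (n+2),
        cesaroKernel a i * cesaroKernel b (n + 1 - i)
        = (a + b + n) * ∑ i ∈ Finset.range (n+1), cesaroKernel a i * cesaroKernel b (n - i) := by
      rw [Finset.mul_sum]
      have split : ∀ i ∈ Finset.range (n+2),
          (n + 1 : ℝ) * (cesaroKernel a i * cesaroKernel b (n + 1 - i))
          = (i : ℝ) * cesaroKernel a i * cesaroKernel b (n + 1 - i)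
            + cesaroKernel a i * (((n + 1 - i : ℕ) : ℝ) * cesaroKernel b (n + 1 - i)) := by
        intro i hi
        have hi' : i ≤ n + 1 := by simpa [Nat.lt_succ_iff] using hi
        have : ((n + 1 - i : ℕ) : ℝ) = (n : ℝ) + 1 - i := by
          push_cast [Nat.cast_sub hi']; ring
        rw [this]; ring
      rw [Finset.sum_congr rfl split, Finset.sum_add_distrib]
      have e1 : ∑ i ∈ Finset.range (n+2), (i : ℝ) * cesaroKernel a i * cesaroKernel b (n + 1 - i)
          = ∑ i ∈ Finset.range (n+1), (a + i) * cesaroKernel a i * cesaroKernel b (n - i) := by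
        rw [Finset.sum_range_succ']
        have h0 : ((0:ℕ) : ℝ) * cesaroKernel a 0 * cesaroKernel b (n + 1 - 0) = 0 := by simp
        rw [h0, add_zero]
        apply Finset.sum_congr rfl
        intro i hi
        have hrec : ((i : ℝ) + 1) * cesaroKernel a (i+1) = (a + i) * cesaroKernel a i :=
          cesaro_rec a i
        push_cast
        rw [hrec]
      have e2 : ∑ i ∈ Finset.range (n+2),
            cesaroKernel a i * (((n + 1 - i : ℕ) : ℝ) * cesaroKernel b (n + 1 - i))
          = ∑ i ∈ Finset.range (n+1),
              cesaroKernel a i * ((b + (n - i : ℕ)) * cesaroKernel b (n - i)) := by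
        rw [Finset.sum_range_succ]
        have h0 : n + 1 - (n + 1) = 0 := by omega
        rw [h0]
        simp only [Nat.cast_zero, zero_mul, mul_zero, add_zero]
        apply Finset.sum_congr rfl
        intro i hi
        have hi' : i ≤ n := by simpa [Nat.lt_succ_iff] using hi
        have hsub : n + 1 - i = (n - i) + 1 := by omega
        rw [hsub]
        congr 1
        have := cesaro_rec b (n - i)
        push_cast at this ⊢
        linarith [this]
      rw [e1, e2, Finset.mul_sum, ← Finset.sum_add_distrib]
      apply Finset.sum_congr rfl
      intro i hi
      have hi' : i ≤ n := by simpa [Nat.lt_succ_iff] using hi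
      have hc : ((n - i : ℕ) : ℝ) = (n : ℝ) - i := by push_cast [Nat.cast_sub hi']; ring
      rw [hc]; ring
    have rec2 : (n + 1 : ℝ) * cesaroKernel (a+b) (n + 1) = (a + b + n) * cesaroKernel (a+b) n :=
      cesaro_rec (a+b) n
    have := key.trans (by rw [ih, ← rec2])
    exact mul_left_cancel₀ h3 this

/-- The Cesàro kernel extended to `ℤ` by `0` on negatives. -/
noncomputable def Kc (a : ℝ) (z : ℤ) : ℝ :=
  if 0 ≤ z then cesaroKernel a z.toNat else 0

lemma Kc_nonneg {a : ℝ} (ha : 0 ≤ a) (z : ℤ) : 0 ≤ Kc a z := by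
  unfold Kc; split
  · exact cesaro_nonneg ha _
  · exact le_refl 0

lemma Kc_neg {a : ℝ} {z : ℤ} (hz : z < 0) : Kc a z = 0 := by
  unfold Kc; rw [if_neg (by omega)]

lemma Kc_ofNat (a : ℝ) (n : ℕ) : Kc a (n : ℤ) = cesaroKernel a n := by
  unfold Kc; rw [if_pos (by positivity)]; simp

/-- Convolution identity for Kc. -/
lemma Kc_conv (a b : ℝ) (n m : ℤ) (W : Finset ℤ) (hW : Finset.Icc n m ⊆ W) :
    ∑ j ∈ W, Kc a (j - n) * Kc b (m - j) = Kc (a + b) (m - n) := by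
  classical
  have hzero : ∀ j ∈ W, j ∉ Finset.Icc n m → Kc a (j - n) * Kc b (m - j) = 0 := by
    intro j _ hj
    rw [Finset.mem_Icc] at hj
    push_neg at hj
    rcases lt_or_ge j n with h | h
    · rw [Kc_neg (by omega), zero_mul]
    · rw [Kc_neg (a := b) (by omega), mul_zero]
  rw [← Finset.sum_subset hW hzero]
  rcases lt_or_ge m n with h | h
  · rw [Finset.Icc_eq_empty (by omega), Finset.sum_empty, Kc_neg (by omega)]
  · -- reindex over range (s+1) with s = (m - n).toNat
    set s := (m - n).toNat with hs
    have hmn : m - n = (s : ℤ) := by omega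
    have : ∑ j ∈ Finset.Icc n m, Kc a (j - n) * Kc b (m - j)
        = ∑ i ∈ Finset.range (s+1), cesaroKernel a i * cesaroKernel b (s - i) := by
      rw [Finset.sum_bij (fun (j : ℤ) (hj : j ∈ Finset.Icc n m) => (j - n).toNat)]
      · intro j hj
        rw [Finset.mem_Icc] at hj
        rw [Finset.mem_range]
        omega
      · intro j hj j' hj' hjj'
        rw [Finset.mem_Icc] at hj hj'
        omega
      · intro i hi
        rw [Finset.mem_range] at hi
        refine ⟨n + i, ?_, ?_⟩
        · rw [Finset.mem_Icc]; omega
        · omega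
      · intro j hj
        rw [Finset.mem_Icc] at hj
        have h1 : Kc a (j - n) = cesaroKernel a (j - n).toNat := by
          unfold Kc; rw [if_pos (by omega)]
        have h2 : Kc b (m - j) = cesaroKernel b (s - (j - n).toNat) := by
          unfold Kc; rw [if_pos (by omega)]
          congr 1
          omega
        rw [h1, h2]
    rw [this, cesaro_vandermonde]
    unfold Kc
    rw [if_pos (by omega)]

/-- Difference identity: `∇ Kc γ = Kc (γ-1)`. -/
lemma Kc_diff (g : ℝ) (s : ℤ) : Kc g s - Kc g (s - 1) = Kc (g - 1) s := by
  rcases lt_trichotomy s 0 with h | h | h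
  · rw [Kc_neg h, Kc_neg (by omega), Kc_neg h, sub_zero]
  · subst h
    unfold Kc
    norm_num [cesaro_zero]
  · -- s ≥ 1
    set t := (s - 1).toNat with ht
    have hs : s = (t : ℤ) + 1 := by omega
    have e1 : Kc g s = cesaroKernel g (t + 1) := by
      unfold Kc; rw [if_pos (by omega)]; congr 1; omega
    have e2 : Kc g (s - 1) = cesaroKernel g t := by
      unfold Kc; rw [if_pos (by omega)]
    have e3 : Kc (g - 1) s = cesaroKernel (g - 1) (t + 1) := by
      unfold Kc; rw [if_pos (by omega)]; congr 1; omega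
    rw [e1, e2, e3]
    -- (t+1)! * both sides
    have hfac : ((t + 1 : ℕ).factorial : ℝ) ≠ 0 := Nat.cast_ne_zero.2 (Nat.factorial_ne_zero _)
    have hfac' : ((t : ℕ).factorial : ℝ) ≠ 0 := Nat.cast_ne_zero.2 (Nat.factorial_ne_zero _)
    have hfe : ((t + 1 : ℕ).factorial : ℝ) = (t + 1) * (t.factorial : ℝ) := by
      push_cast [Nat.factorial_succ]; ring
    have hp1 : ∏ i ∈ Finset.range (t+1), (g + i) = (∏ i ∈ Finset.range t, (g + i)) * (g + t) :=
      Finset.prod_range_succ _ _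
    have hp2 : ∏ i ∈ Finset.range (t+1), (g - 1 + (i : ℝ))
        = (∏ i ∈ Finset.range t, (g + (i : ℝ))) * (g - 1) := by
      rw [Finset.prod_range_succ']
      congr 1
      · apply Finset.prod_congr rfl; intro i _; push_cast; ring
      · norm_num
    unfold cesaroKernel
    rw [hp1, hp2, hfe]
    field_simp
    ring

lemma Kc_binom (g : ℝ) (M : ℕ) :
    ∀ s : ℤ, ∑ j ∈ Finset.range (M + 1),
        (-1 : ℝ) ^ j * (Nat.choose M j : ℝ) * Kc g (s - j)
      = Kc (g - M) s := by
  induction M with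
  | zero => intro s; simp
  | succ M ih =>
    intro s
    have aux : ∑ j ∈ Finset.range (M + 1), (-1 : ℝ) ^ j * (Nat.choose M (j+1) : ℝ) * Kc g (s - 1 - j)
        = Kc g s - Kc (g - M) s := by
      have h1 : ∑ j ∈ Finset.range (M + 2), (-1 : ℝ) ^ j * (Nat.choose M j : ℝ) * Kc g (s - j)
          = Kc (g - M) s := by
        rw [Finset.sum_range_succ, Nat.choose_succ_self]
        simpa using ih s
      rw [Finset.sum_range_succ'] at h1
      have h2 : ∀ j ∈ Finset.range (M+1),
          (-1 : ℝ) ^ (j+1) * (Nat.choose M (j+1) : ℝ) * Kc g (s - ((j+1 : ℕ) : ℤ))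
          = -((-1 : ℝ) ^ j * (Nat.choose M (j+1) : ℝ) * Kc g (s - 1 - j)) := by
        intro j _
        have e : s - ((j+1 : ℕ) : ℤ) = s - 1 - (j : ℤ) := by push_cast; ring
        rw [e]
        ring
      rw [Finset.sum_congr rfl h2, Finset.sum_neg_distrib] at h1
      simp only [pow_zero, Nat.choose_zero_right, Nat.cast_one, one_mul, Nat.cast_zero,
        Nat.cast_ofNat, sub_zero] at h1
      linarith [h1]
    have step2 : ∀ j ∈ Finset.range (M + 1),
        (-1 : ℝ) ^ (j+1) * (Nat.choose (M+1) (j+1) : ℝ) * Kc g (s - ((j+1 : ℕ) : ℤ))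
        = -((-1 : ℝ) ^ j * (Nat.choose M j : ℝ) * Kc g ((s-1) - j))
          + -((-1 : ℝ) ^ j * (Nat.choose M (j+1) : ℝ) * Kc g (s - 1 - j)) := by
      intro j _
      have e : s - ((j+1 : ℕ) : ℤ) = s - 1 - (j : ℤ) := by push_cast; ring
      rw [e, Nat.choose_succ_succ]
      push_cast
      ring
    calc ∑ j ∈ Finset.range (M + 2), (-1 : ℝ) ^ j * (Nat.choose (M+1) j : ℝ) * Kc g (s - j)
        = (∑ j ∈ Finset.range (M + 1),
            (-1 : ℝ) ^ (j+1) * (Nat.choose (M+1) (j+1) : ℝ) * Kc g (s - ((j+1 : ℕ) : ℤ)))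
          + (-1 : ℝ) ^ 0 * (Nat.choose (M+1) 0 : ℝ) * Kc g (s - ((0:ℕ) : ℤ)) :=
          Finset.sum_range_succ' _ _
      _ = (-(∑ j ∈ Finset.range (M + 1), (-1 : ℝ) ^ j * (Nat.choose M j : ℝ) * Kc g ((s-1) - j))
          + -(∑ j ∈ Finset.range (M + 1), (-1 : ℝ) ^ j * (Nat.choose M (j+1) : ℝ) * Kc g (s - 1 - j)))
          + Kc g s := by
          rw [Finset.sum_congr rfl step2, Finset.sum_add_distrib, Finset.sum_neg_distrib,
            Finset.sum_neg_distrib]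
          norm_num
      _ = (-(Kc (g - M) (s-1)) + -(Kc g s - Kc (g - M) s)) + Kc g s := by rw [ih (s-1), aux]
      _ = Kc (g - M) s - Kc (g - M) (s - 1) := by ring
      _ = Kc (g - M - 1) s := Kc_diff (g - M) s
      _ = Kc (g - ((M+1 : ℕ) : ℝ)) s := by push_cast; ring_nf

lemma weylSumPlus_eq_sum_s9 (g : ℝ) (f : ℤ → ℂ) (S : Finset ℤ)
    (hS : Function.support f ⊆ S) (n : ℤ) :
    weylSumPlus g f n = ∑ j ∈ S, (Kc g (j - n) : ℂ) * f j := by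
  rw [weylSumPlus, tsum_eq_sum (s := S) (f := fun j =>
      if n ≤ j then (cesaroKernel g (j - n).toNat : ℂ) * f j else 0)]
  · apply Finset.sum_congr rfl
    intro j _
    by_cases h : n ≤ j
    · rw [if_pos h]
      congr 2
      unfold Kc
      rw [if_pos (by omega)]
    · rw [if_neg h, Kc_neg (by omega)]
      simp
  · intro j hj
    have : f j = 0 := Function.notMem_support.1 fun hmem => hj (hS hmem)
    simp [this]

lemma weylSumMinus_eq_sum (g : ℝ) (f : ℤ → ℂ) (S : Finset ℤ)
    (hS : Function.support f ⊆ S) (n : ℤ) :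
    weylSumMinus g f n = ∑ j ∈ S, (Kc g (n - j) : ℂ) * f j := by
  rw [weylSumMinus, tsum_eq_sum (s := S) (f := fun j =>
      if j ≤ n then (cesaroKernel g (n - j).toNat : ℂ) * f j else 0)]
  · apply Finset.sum_congr rfl
    intro j _
    by_cases h : j ≤ n
    · rw [if_pos h]
      congr 2
      unfold Kc
      rw [if_pos (by omega)]
    · rw [if_neg h, Kc_neg (by omega)]
      simp
  · intro j hj
    have : f j = 0 := Function.notMem_support.1 fun hmem => hj (hS hmem)
    simp [this]

lemma weylPlus_eq_sum {α : ℝ} (hα : 0 ≤ α) (f : ℤ → ℂ) (S : Finset ℤ)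
    (hS : Function.support f ⊆ S) (n : ℤ) :
    weylPlus α f n = ∑ j ∈ S, (Kc (-α) (j - n) : ℂ) * f j := by
  rcases eq_or_lt_of_le hα with h0 | h0
  · rw [weylPlus, if_pos (le_of_eq h0.symm), weylSumPlus_eq_sum_s9 _ f S hS, ← h0, neg_zero]
  · rw [weylPlus, if_neg (not_le.2 h0)]
    set m : ℕ := ⌊α⌋₊ + 1 with hm
    set g : ℝ := (⌊α⌋₊ + 1 : ℝ) - α with hg
    have hrw : ∀ j ∈ Finset.range (m + 1),
        ((-1 : ℂ) ^ j * (Nat.choose m j : ℂ)) * weylSumPlus g f (n + j)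
        = ∑ i ∈ S, (((-1 : ℝ) ^ j * (Nat.choose m j : ℝ) * Kc g ((i - n) - j) : ℝ) : ℂ) * f i := by
      intro j _
      rw [weylSumPlus_eq_sum_s9 g f S hS, Finset.mul_sum]
      apply Finset.sum_congr rfl
      intro i _
      have e : i - (n + (j : ℤ)) = (i - n) - j := by ring
      rw [e]
      push_cast
      ring
    rw [Finset.sum_congr rfl hrw, Finset.sum_comm]
    apply Finset.sum_congr rfl
    intro i _
    rw [← Finset.sum_mul, ← Complex.ofReal_sum, Kc_binom g m (i - n)]
    congr 2
    rw [hg, hm]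
    push_cast
    ring

lemma weylMinus_eq_sum {α : ℝ} (hα : 0 ≤ α) (f : ℤ → ℂ) (S : Finset ℤ)
    (hS : Function.support f ⊆ S) (n : ℤ) :
    weylMinus α f n = ∑ j ∈ S, (Kc (-α) (n - j) : ℂ) * f j := by
  rcases eq_or_lt_of_le hα with h0 | h0
  · rw [weylMinus, if_pos (le_of_eq h0.symm), weylSumMinus_eq_sum _ f S hS, ← h0, neg_zero]
  · rw [weylMinus, if_neg (not_le.2 h0)]
    set m : ℕ := ⌊α⌋₊ + 1 with hm
    set g : ℝ := (⌊α⌋₊ + 1 : ℝ) - α with hg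
    have hrw : ∀ j ∈ Finset.range (m + 1),
        ((-1 : ℂ) ^ j * (Nat.choose m j : ℂ)) * weylSumMinus g f (n - j)
        = ∑ i ∈ S, (((-1 : ℝ) ^ j * (Nat.choose m j : ℝ) * Kc g ((n - i) - j) : ℝ) : ℂ) * f i := by
      intro j _
      rw [weylSumMinus_eq_sum g f S hS, Finset.mul_sum]
      apply Finset.sum_congr rfl
      intro i _
      have e : (n - (j : ℤ)) - i = (n - i) - j := by ring
      rw [e]
      push_cast
      ring
    rw [Finset.sum_congr rfl hrw, Finset.sum_comm]
    apply Finset.sum_congr rfl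
    intro i _
    rw [← Finset.sum_mul, ← Complex.ofReal_sum, Kc_binom g m (n - i)]
    congr 2
    rw [hg, hm]
    push_cast
    ring

/-- The combined kernel for `weyl`. -/
noncomputable def KK (α : ℝ) (n j : ℤ) : ℝ :=
  if 0 ≤ n then Kc (-α) (j - n) else Kc (-α) (n - j)

lemma weyl_eq_sum {α : ℝ} (hα : 0 ≤ α) (f : ℤ → ℂ) (S : Finset ℤ)
    (hS : Function.support f ⊆ S) (n : ℤ) :
    weyl α f n = ∑ j ∈ S, (KK α n j : ℂ) * f j := by
  rw [weyl]
  simp only [KK]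
  by_cases h : 0 ≤ n
  · rw [if_pos h, weylPlus_eq_sum hα f S hS]
    apply Finset.sum_congr rfl
    intro j _
    rw [if_pos h]
  · rw [if_neg h, weylMinus_eq_sum hα f S hS]
    apply Finset.sum_congr rfl
    intro j _
    rw [if_neg h]

lemma KK_nonneg {α : ℝ} (hα : α ≤ 0) (n j : ℤ) : 0 ≤ KK α n j := by
  unfold KK; split <;> exact Kc_nonneg (by linarith) _

lemma cesaro_natAbs_nonneg {c : ℝ} {n : ℤ} (hn : 0 ≤ n) :
    cesaroKernel c n.natAbs = Kc c n := by
  unfold Kc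
  rw [if_pos hn]
  congr 1
  omega

lemma cesaro_natAbs_neg {c : ℝ} {n : ℤ} (hn : n < 0) :
    cesaroKernel c n.natAbs = Kc c (-n) := by
  unfold Kc
  rw [if_pos (by omega)]
  congr 1
  omega

lemma Kc_zero_eq (z : ℤ) : Kc 0 z = if z = 0 then 1 else 0 := by
  unfold Kc
  rcases lt_trichotomy z 0 with h | h | h
  · rw [if_neg (by omega), if_neg (by omega)]
  · subst h; norm_num [cesaro_zero]
  · rw [if_pos (by omega), if_neg (by omega)]
    have : z.toNat = (z.toNat - 1) + 1 := by omega
    rw [this]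
    unfold cesaroKernel
    rw [Finset.prod_range_succ']
    norm_num

lemma cesaro_one (n : ℕ) : cesaroKernel 1 n = 1 := by
  unfold cesaroKernel
  rw [div_eq_one_iff_eq (Nat.cast_ne_zero.2 (Nat.factorial_ne_zero n))]
  induction n with
  | zero => simp
  | succ n ih =>
    rw [Finset.prod_range_succ, ih, Nat.factorial_succ]
    push_cast
    ring

lemma qNorm_le {a b : ℝ} (ha : 0 ≤ a) (hab : a ≤ b) (f : ℤ → ℂ)
    (hf : (Function.support f).Finite) : qNorm a f ≤ qNorm b f := by
  classical
  have hb : 0 ≤ b := ha.trans hab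
  set S := hf.toFinset with hSdef
  have hSsupp : Function.support f ⊆ S := by
    intro x hx; exact Finset.mem_coe.2 ((Set.Finite.mem_toFinset hf).2 hx)
  set N : ℕ := S.sup Int.natAbs with hN
  set I : Finset ℤ := Finset.Icc (-(N:ℤ)) (N:ℤ) with hI
  have hSI : ∀ j ∈ S, -(N:ℤ) ≤ j ∧ j ≤ (N:ℤ) := by
    intro j hj
    have := Finset.le_sup (f := Int.natAbs) hj
    omega
  -- weyl vanishes outside the window I
  have hsupp : ∀ c : ℝ, 0 ≤ c → ∀ n : ℤ, n ∉ I → weyl c f n = 0 := by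
    intro c hc n hn
    rw [weyl_eq_sum hc f S hSsupp]
    apply Finset.sum_eq_zero
    intro j hj
    have hj' := hSI j hj
    rw [hI, Finset.mem_Icc] at hn
    have hcase : n < -(N:ℤ) ∨ (N:ℤ) < n := by
      by_contra hcon
      push_neg at hcon
      exact hn ⟨hcon.1, hcon.2⟩
    unfold KK
    rcases hcase with h | h
    · rw [if_neg (by omega), Kc_neg (show n - j < 0 by omega)]
      simp
    · rw [if_pos (by omega), Kc_neg (show j - n < 0 by omega)]
      simp
  -- qNorm as a finite sum
  have qfin : ∀ c : ℝ, 0 ≤ c →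
      qNorm c f = ∑ n ∈ I, cesaroKernel (c+1) n.natAbs * ‖weyl c f n‖ := by
    intro c hc
    rw [qNorm]
    apply tsum_eq_sum
    intro n hn
    rw [hsupp c hc n hn]
    simp
  -- composition identity
  have comp : ∀ n ∈ I, weyl a f n = ∑ j ∈ I, (KK (a-b) n j : ℂ) * weyl b f j := by
    intro n hnI
    rw [weyl_eq_sum ha f S hSsupp]
    have hrw : ∀ j ∈ I, (KK (a-b) n j : ℂ) * weyl b f j
        = ∑ m ∈ S, ((KK (a-b) n j * KK b j m : ℝ) : ℂ) * f m := by
      intro j _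
      rw [weyl_eq_sum hb f S hSsupp, Finset.mul_sum]
      apply Finset.sum_congr rfl
      intro m _
      push_cast
      ring
    rw [Finset.sum_congr rfl hrw, Finset.sum_comm]
    apply Finset.sum_congr rfl
    intro m hm
    have hmI := hSI m hm
    rw [hI, Finset.mem_Icc] at hnI
    rw [← Finset.sum_mul, ← Complex.ofReal_sum]
    have hreal : (∑ x ∈ I, KK (a-b) n x * KK b x m) = KK a n m := by
      by_cases h0 : 0 ≤ n
      · have ht : ∀ j ∈ I, KK (a-b) n j * KK b j m = Kc (b-a) (j - n) * Kc (-b) (m - j) := by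
          intro j _
          unfold KK
          rw [if_pos h0, show -(a-b) = b - a by ring]
          by_cases hj : 0 ≤ j
          · rw [if_pos hj]
          · rw [if_neg hj, Kc_neg (show j - n < 0 by omega)]
            ring
        rw [Finset.sum_congr rfl ht,
          Kc_conv (b-a) (-b) n m I (Finset.Icc_subset_Icc (by omega) (by omega))]
        unfold KK
        rw [if_pos h0, show b - a + -b = -a by ring]
      · have ht : ∀ j ∈ I, KK (a-b) n j * KK b j m = Kc (-b) (j - m) * Kc (b-a) (n - j) := by
          intro j _
          unfold KK
          rw [if_neg h0, show -(a-b) = b - a by ring]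
          by_cases hj : 0 ≤ j
          · rw [if_pos hj, Kc_neg (show n - j < 0 by omega)]
            ring
          · rw [if_neg hj]
            ring
        rw [Finset.sum_congr rfl ht,
          Kc_conv (-b) (b-a) m n I (Finset.Icc_subset_Icc (by omega) (by omega))]
        unfold KK
        rw [if_neg h0, show -b + (b - a) = -a by ring]
    rw [hreal]
  -- the weight estimate
  have wt : ∀ j ∈ I, ∑ n ∈ I, cesaroKernel (a+1) n.natAbs * KK (a-b) n j
      ≤ cesaroKernel (b+1) j.natAbs := by
    intro j hjI
    rw [hI, Finset.mem_Icc] at hjI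
    by_cases hj : 0 ≤ j
    · have ht : ∀ n ∈ I, cesaroKernel (a+1) n.natAbs * KK (a-b) n j
          = Kc (a+1) (n - 0) * Kc (b-a) (j - n) := by
        intro n _
        unfold KK
        rw [show -(a-b) = b - a by ring, sub_zero]
        by_cases h0 : 0 ≤ n
        · rw [if_pos h0, cesaro_natAbs_nonneg h0]
        · rw [if_neg h0, Kc_neg (show n - j < 0 by omega), Kc_neg (show n < 0 by omega)]
          ring
      rw [Finset.sum_congr rfl ht,
        Kc_conv (a+1) (b-a) 0 j I (Finset.Icc_subset_Icc (by omega) (by omega))]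
      rw [cesaro_natAbs_nonneg hj, show (a+1) + (b-a) = b + 1 by ring, sub_zero]
    · push_neg at hj
      have ht : ∀ n ∈ I, cesaroKernel (a+1) n.natAbs * KK (a-b) n j
          ≤ Kc (b-a) (n - j) * Kc (a+1) (0 - n) := by
        intro n _
        unfold KK
        rw [show -(a-b) = b - a by ring]
        by_cases h0 : 0 ≤ n
        · rw [if_pos h0, Kc_neg (show j - n < 0 by omega)]
          rw [mul_zero]
          exact mul_nonneg (Kc_nonneg (by linarith) _) (Kc_nonneg (by linarith) _)
        · rw [if_neg h0, cesaro_natAbs_neg (by omega)]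
          rw [show (0:ℤ) - n = -n by ring]
          exact le_of_eq (mul_comm _ _)
      calc ∑ n ∈ I, cesaroKernel (a+1) n.natAbs * KK (a-b) n j
          ≤ ∑ n ∈ I, Kc (b-a) (n - j) * Kc (a+1) (0 - n) := Finset.sum_le_sum ht
        _ = Kc ((b-a) + (a+1)) (0 - j) :=
            Kc_conv (b-a) (a+1) j 0 I (Finset.Icc_subset_Icc (by omega) (by omega))
        _ = cesaroKernel (b+1) j.natAbs := by
            rw [cesaro_natAbs_neg hj, show (b-a) + (a+1) = b + 1 by ring,
              show (0:ℤ) - j = -j by ring]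
  -- put things together
  rw [qfin a ha, qfin b hb]
  have step1 : ∀ n ∈ I, cesaroKernel (a+1) n.natAbs * ‖weyl a f n‖
      ≤ ∑ j ∈ I, (cesaroKernel (a+1) n.natAbs * KK (a-b) n j) * ‖weyl b f j‖ := by
    intro n hn
    rw [comp n hn]
    have tri : ‖∑ j ∈ I, (KK (a-b) n j : ℂ) * weyl b f j‖
        ≤ ∑ j ∈ I, KK (a-b) n j * ‖weyl b f j‖ := by
      refine le_trans (norm_sum_le _ _) (le_of_eq ?_)
      apply Finset.sum_congr rfl
      intro j _
      rw [norm_mul, Complex.norm_real, Real.norm_eq_abs, abs_of_nonneg (KK_nonneg (by linarith) n j)]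
    calc cesaroKernel (a+1) n.natAbs * ‖∑ j ∈ I, (KK (a-b) n j : ℂ) * weyl b f j‖
        ≤ cesaroKernel (a+1) n.natAbs * ∑ j ∈ I, KK (a-b) n j * ‖weyl b f j‖ :=
          mul_le_mul_of_nonneg_left tri (cesaro_nonneg (by linarith) _)
      _ = ∑ j ∈ I, (cesaroKernel (a+1) n.natAbs * KK (a-b) n j) * ‖weyl b f j‖ := by
          rw [Finset.mul_sum]
          apply Finset.sum_congr rfl
          intro j _
          ring
  calc ∑ n ∈ I, cesaroKernel (a+1) n.natAbs * ‖weyl a f n‖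
      ≤ ∑ n ∈ I, ∑ j ∈ I,
          (cesaroKernel (a+1) n.natAbs * KK (a-b) n j) * ‖weyl b f j‖ :=
        Finset.sum_le_sum step1
    _ = ∑ j ∈ I, (∑ n ∈ I, cesaroKernel (a+1) n.natAbs * KK (a-b) n j)
          * ‖weyl b f j‖ := by
        rw [Finset.sum_comm]
        apply Finset.sum_congr rfl
        intro j _
        rw [Finset.sum_mul]
    _ ≤ ∑ j ∈ I, cesaroKernel (b+1) j.natAbs * ‖weyl b f j‖ := by
        apply Finset.sum_le_sum
        intro j hj
        exact mul_le_mul_of_nonneg_right (wt j hj) (norm_nonneg _)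

lemma weyl_zero_eq (f : ℤ → ℂ) (hf : (Function.support f).Finite) (n : ℤ) :
    weyl 0 f n = f n := by
  classical
  have hSsupp : Function.support f ⊆ (hf.toFinset : Set ℤ) := by
    intro x hx; exact Finset.mem_coe.2 ((Set.Finite.mem_toFinset hf).2 hx)
  rw [weyl_eq_sum le_rfl f hf.toFinset hSsupp]
  have hterm : ∀ j ∈ hf.toFinset, (KK 0 n j : ℂ) * f j = if j = n then f j else 0 := by
    intro j _
    unfold KK
    rw [neg_zero]
    by_cases h0 : 0 ≤ n
    · rw [if_pos h0, Kc_zero_eq]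
      by_cases hj : j = n
      · rw [if_pos (by omega : j - n = 0), if_pos hj]
        norm_num
      · rw [if_neg (by omega : ¬ j - n = 0), if_neg hj]
        norm_num
    · rw [if_neg h0, Kc_zero_eq]
      by_cases hj : j = n
      · rw [if_pos (by omega : n - j = 0), if_pos hj]
        norm_num
      · rw [if_neg (by omega : ¬ n - j = 0), if_neg hj]
        norm_num
  rw [Finset.sum_congr rfl hterm, Finset.sum_ite_eq' hf.toFinset n f]
  by_cases hn : n ∈ hf.toFinset
  · rw [if_pos hn]
  · rw [if_neg hn]
    by_contra hval
    exact hn ((Set.Finite.mem_toFinset hf).2 (Ne.symm hval))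

lemma qNorm_zero (f : ℤ → ℂ) (hf : (Function.support f).Finite) :
    qNorm 0 f = ∑' n : ℤ, ‖f n‖ := by
  rw [qNorm]
  apply tsum_congr
  intro n
  rw [weyl_zero_eq f hf n, zero_add, cesaro_one, one_mul]

/-- **Monotonicity of the norms `q_α`.** For `0 < α < β` and finitely supported
`f : ℤ → ℂ`, `q_α(f) ≤ q_β(f)`; moreover `q_0(f) = ‖f‖_{ℓ¹(ℤ)} ≤ q_α(f)`. -/
theorem qNorm_mono
    (α β : ℝ) (hα : 0 < α) (hαβ : α < β) (f : ℤ → ℂ)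
    (hf : (Function.support f).Finite) :
    qNorm α f ≤ qNorm β f ∧
    qNorm 0 f = (∑' n : ℤ, ‖f n‖) ∧
    (∑' n : ℤ, ‖f n‖) ≤ qNorm α f := by
  refine ⟨qNorm_le hα.le hαβ.le f hf, qNorm_zero f hf, ?_⟩
  rw [← qNorm_zero f hf]
  exact qNorm_le le_rfl hα.le f hf
end

section
/- Let α > 0, X a complex Banach space, T a (C,α)-bounded operator on X, and f : ℕ₀ → ℂ a sequence with ∑_{j=0}^{∞} j^α |f(j)| < ∞ (f extended by 0 to negative integers). Then the series ∑_{j=0}^{∞} f(j) T^j converges in operator norm, the Weyl differences W_+^α f(n) = ∑_{j=n}^{∞} k^{−α}(j−n) f(j) converge absolutely for every n ≥ 0, the series ∑_{n=0}^{∞} W_+^α f(n) Δ^{−α}𝒯(n) converges in operator norm, and ∑_{n=0}^{∞} W_+^α f(n) Δ^{−α}𝒯(n) = ∑_{j=0}^{∞} f(j) T^j. -/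
open scoped BigOperators

/-- The Cesàro sum of order `α` of an operator `T`:
`Δ^{−α}𝒯(n) = ∑_{j=0}^{n} k^α(n−j) T^j`. -/
noncomputable def cesaroSum {X : Type*} [NormedAddCommGroup X] [NormedSpace ℂ X]
    (α : ℝ) (T : X →L[ℂ] X) (n : ℕ) : X →L[ℂ] X :=
  ∑ j ∈ Finset.range (n + 1), (cesaroKernel α (n - j) : ℂ) • T ^ j

/-- The Cesàro mean of order `α` of an operator `T`:
`M_T^α(n) = Δ^{−α}𝒯(n) / k^{α+1}(n)`. -/
noncomputable def cesaroMean {X : Type*} [NormedAddCommGroup X] [NormedSpace ℂ X]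
    (α : ℝ) (T : X →L[ℂ] X) (n : ℕ) : X →L[ℂ] X :=
  ((cesaroKernel (α + 1) n : ℂ))⁻¹ • cesaroSum α T n

lemma cesaroKernel_succ (α : ℝ) (n : ℕ) :
    ((n : ℝ) + 1) * cesaroKernel α (n + 1) = (α + n) * cesaroKernel α n := by
  unfold cesaroKernel
  rw [Finset.prod_range_succ, Nat.factorial_succ]
  have h1 : (Nat.factorial n : ℝ) ≠ 0 := Nat.cast_ne_zero.mpr (Nat.factorial_ne_zero n)
  have h2 : ((n : ℝ) + 1) ≠ 0 := by positivity
  push_cast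
  field_simp

lemma cesaroKernel_pos {α : ℝ} (hα : 0 < α) (n : ℕ) : 0 < cesaroKernel α n := by
  unfold cesaroKernel
  have : 0 < ∏ i ∈ Finset.range n, (α + i) :=
    Finset.prod_pos (fun i _ => by positivity)
  positivity

lemma cesaroKernel_nat_zero {n : ℕ} (hn : n ≠ 0) : cesaroKernel 0 n = 0 := by
  unfold cesaroKernel
  rw [Finset.prod_eq_zero (Finset.mem_range.mpr (Nat.pos_of_ne_zero hn)) (by norm_num)]
  simp

lemma cesaroKernel_conv (β γ : ℝ) (n : ℕ) :
    ∑ m ∈ Finset.range (n + 1), cesaroKernel β m * cesaroKernel γ (n - m)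
      = cesaroKernel (β + γ) n := by
  induction n with
  | zero => simp [cesaroKernel]
  | succ n ih =>
    have hne : ((n : ℝ) + 1) ≠ 0 := by positivity
    have key : ((n : ℝ) + 1) * ∑ m ∈ Finset.range (n + 2),
        cesaroKernel β m * cesaroKernel γ (n + 1 - m)
        = (β + γ + n) * ∑ m ∈ Finset.range (n + 1),
            cesaroKernel β m * cesaroKernel γ (n - m) := by
      rw [Finset.mul_sum]
      have split : ∀ m ∈ Finset.range (n + 2),
          ((n : ℝ) + 1) * (cesaroKernel β m * cesaroKernel γ (n + 1 - m))
          = (m : ℝ) * cesaroKernel β m * cesaroKernel γ (n + 1 - m)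
            + ((n + 1 - m : ℕ) : ℝ) * cesaroKernel γ (n + 1 - m) * cesaroKernel β m := by
        intro m hm
        have hm' : m ≤ n + 1 := Nat.lt_succ_iff.mp (Finset.mem_range.mp hm)
        have : ((n + 1 - m : ℕ) : ℝ) = (n : ℝ) + 1 - m := by
          push_cast [Nat.cast_sub hm']; ring
        rw [this]; ring
      rw [Finset.sum_congr rfl split, Finset.sum_add_distrib]
      have s1 : ∑ m ∈ Finset.range (n + 2),
          (m : ℝ) * cesaroKernel β m * cesaroKernel γ (n + 1 - m)
          = ∑ m ∈ Finset.range (n + 1),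
              (β + m) * cesaroKernel β m * cesaroKernel γ (n - m) := by
        rw [Finset.sum_range_succ']
        simp only [Nat.cast_zero, zero_mul, add_zero, Nat.cast_succ]
        refine Finset.sum_congr rfl fun m hm => ?_
        have : n + 1 - (m + 1) = n - m := by omega
        rw [this]
        have := cesaroKernel_succ β m
        push_cast
        linear_combination cesaroKernel γ (n - m) * this
      have s2 : ∑ m ∈ Finset.range (n + 2),
          ((n + 1 - m : ℕ) : ℝ) * cesaroKernel γ (n + 1 - m) * cesaroKernel β m
          = ∑ m ∈ Finset.range (n + 1),
              (γ + ((n - m : ℕ) : ℝ)) * cesaroKernel γ (n - m) * cesaroKernel β m := by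
        rw [Finset.sum_range_succ]
        simp only [Nat.sub_self, Nat.cast_zero, zero_mul]
        rw [add_zero]
        refine Finset.sum_congr rfl fun m hm => ?_
        have hm' : m ≤ n := Nat.lt_succ_iff.mp (Finset.mem_range.mp hm)
        have h1 : n + 1 - m = (n - m) + 1 := by omega
        rw [h1]
        have := cesaroKernel_succ γ (n - m)
        push_cast
        linear_combination cesaroKernel β m * this
      rw [s1, s2, ← Finset.sum_add_distrib, Finset.mul_sum]
      refine Finset.sum_congr rfl fun m hm => ?_
      have hm' : m ≤ n := Nat.lt_succ_iff.mp (Finset.mem_range.mp hm)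
      have : ((n - m : ℕ) : ℝ) = (n : ℝ) - m := by
        push_cast [Nat.cast_sub hm']; ring
      rw [this]; ring
    have key2 := cesaroKernel_succ (β + γ) n
    have : ((n : ℝ) + 1) * ∑ m ∈ Finset.range (n + 2),
        cesaroKernel β m * cesaroKernel γ (n + 1 - m)
        = ((n : ℝ) + 1) * cesaroKernel (β + γ) (n + 1) := by
      rw [key, ih, key2]
    exact mul_left_cancel₀ hne this

lemma cesaroKernel_mono {α : ℝ} (hα : 0 < α) : Monotone (cesaroKernel (α + 1)) := by
  apply monotone_nat_of_le_succ
  intro n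
  have h := cesaroKernel_succ (α + 1) n
  have hpos : (0:ℝ) < (n : ℝ) + 1 := by positivity
  have hk := cesaroKernel_pos (by linarith : (0:ℝ) < α + 1) n
  rw [show cesaroKernel (α+1) (n+1) = ((α + 1 + n) / ((n:ℝ)+1)) * cesaroKernel (α+1) n by
    field_simp; linarith [h]]
  have : (1:ℝ) ≤ (α + 1 + n) / ((n:ℝ)+1) := by
    rw [le_div_iff₀ hpos]; linarith
  nlinarith

lemma cesaroKernel_le {α : ℝ} (hα : 0 < α) (n : ℕ) :
    cesaroKernel (α + 1) n ≤ Real.exp α * ((n : ℝ) + 1) ^ α := by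
  have hrp1 : (1:ℝ) ≤ ((n:ℝ) + 1) ^ α :=
    Real.one_le_rpow (by push_cast; linarith [Nat.cast_nonneg (α := ℝ) n]) hα.le
  rcases Nat.eq_zero_or_pos n with rfl | hn
  · simp [cesaroKernel]
    nlinarith [Real.one_le_exp hα.le]
  -- rewrite kernel as product of (1 + α/(i+1))
  have hprod : cesaroKernel (α + 1) n = ∏ i ∈ Finset.range n, (1 + α / ((i : ℝ) + 1)) := by
    unfold cesaroKernel
    rw [eq_comm]
    have hfac : ∀ m : ℕ, (Nat.factorial m : ℝ) = ∏ i ∈ Finset.range m, ((i : ℝ) + 1) := by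
      intro m
      induction m with
      | zero => simp
      | succ m ihm => rw [Finset.prod_range_succ, ← ihm, Nat.factorial_succ]; push_cast; ring
    rw [eq_div_iff (by positivity), hfac n, ← Finset.prod_mul_distrib]
    refine Finset.prod_congr rfl fun i _ => ?_
    have : ((i:ℝ) + 1) ≠ 0 := by positivity
    field_simp; ring
  rw [hprod]
  have step : ∏ i ∈ Finset.range n, (1 + α / ((i : ℝ) + 1))
      ≤ ∏ i ∈ Finset.range n, Real.exp (α / ((i : ℝ) + 1)) := by
    apply Finset.prod_le_prod
    · intro i _; positivity
    · intro i _; exact Real.add_one_le_exp _ |>.trans_eq' (by ring_nf)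
  refine step.trans ?_
  rw [← Real.exp_sum]
  have hsum : ∑ i ∈ Finset.range n, α / ((i : ℝ) + 1) = α * (harmonic n : ℝ) := by
    rw [harmonic]
    push_cast
    rw [Finset.mul_sum]
    refine Finset.sum_congr rfl fun i _ => ?_
    rw [div_eq_mul_inv]
  rw [hsum]
  have hhar : (harmonic n : ℝ) ≤ 1 + Real.log n := harmonic_le_one_add_log n
  have h1 : Real.exp (α * (harmonic n : ℝ)) ≤ Real.exp (α * (1 + Real.log n)) :=
    Real.exp_le_exp.mpr (by nlinarith)
  refine h1.trans ?_
  rw [mul_add, Real.exp_add, mul_one]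
  have hn' : (0:ℝ) < n := by exact_mod_cast hn
  have : Real.exp (α * Real.log n) ≤ ((n:ℝ) + 1) ^ α := by
    rw [mul_comm, ← Real.rpow_def_of_pos hn']
    exact Real.rpow_le_rpow (Nat.cast_nonneg n) (by linarith) hα.le
  exact mul_le_mul_of_nonneg_left this (Real.exp_pos α).le

lemma cesaroKernel_neg_summable {α : ℝ} (hα : 0 < α) :
    Summable (fun j : ℕ => |cesaroKernel (-α) j|) := by
  set a : ℕ → ℝ := fun j => |cesaroKernel (-α) j| with ha
  set j0 : ℕ := ⌈α⌉₊ with hj0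
  have hstep : ∀ j : ℕ, j0 ≤ j →
      α * a j = (j : ℝ) * a j - ((j : ℝ) + 1) * a (j + 1) := by
    intro j hj
    have hjα : α ≤ (j : ℝ) := (Nat.ceil_le.mp hj)
    have h := cesaroKernel_succ (-α) j
    have habs : ((j : ℝ) + 1) * a (j + 1) = ((j : ℝ) - α) * a j := by
      have : ((j:ℝ)+1) * |cesaroKernel (-α) (j+1)| = |((j:ℝ)+1) * cesaroKernel (-α) (j+1)| := by
        rw [abs_mul, abs_of_nonneg (by positivity : (0:ℝ) ≤ (j:ℝ)+1)]
      rw [ha]; dsimp only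
      rw [this, h, abs_mul, abs_of_nonneg (by linarith : (0:ℝ) ≤ -α + j)]
      ring
    linarith [habs]
  -- partial sums are bounded
  have hbdd : ∀ N : ℕ, ∑ j ∈ Finset.range N, a j
      ≤ ∑ j ∈ Finset.range j0, a j + (j0 : ℝ) * a j0 / α := by
    intro N
    have hmono : ∑ j ∈ Finset.range N, a j ≤ ∑ j ∈ Finset.range (j0 + N), a j := by
      apply Finset.sum_le_sum_of_subset_of_nonneg
      · exact Finset.range_subset_range.mpr (by omega)
      · intro i _ _; exact abs_nonneg _
    refine hmono.trans ?_
    rw [Finset.range_eq_Ico, ← Finset.sum_Ico_consecutive _ (Nat.zero_le j0) (by omega : j0 ≤ j0 + N),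
      ← Finset.range_eq_Ico]
    have htail : ∑ j ∈ Finset.Ico j0 (j0 + N), a j ≤ (j0 : ℝ) * a j0 / α := by
      rw [Finset.sum_Ico_eq_sum_range]
      set F : ℕ → ℝ := fun m => ((j0 + m : ℕ) : ℝ) * a (j0 + m) with hF
      have : ∀ i ∈ Finset.range (j0 + N - j0),
          a (j0 + i) = (F i - F (i + 1)) / α := by
        intro i _
        have h1 := hstep (j0 + i) (by omega)
        rw [hF]
        dsimp only
        have h2 : j0 + (i + 1) = j0 + i + 1 := by omega
        rw [h2]
        push_cast
        push_cast at h1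
        field_simp
        linarith
      rw [Finset.sum_congr rfl this, ← Finset.sum_div]
      rw [Finset.sum_range_sub' F]
      have hnn : (0:ℝ) ≤ F (j0 + N - j0) := by rw [hF]; positivity
      have hF0 : F 0 = (j0 : ℝ) * a j0 := by rw [hF]; simp
      rw [div_le_div_iff_of_pos_right hα]
      linarith
    linarith
  exact summable_of_sum_range_le (fun n => abs_nonneg _) hbdd

lemma cesaroSum_eq_smul_mean {X : Type*} [NormedAddCommGroup X] [NormedSpace ℂ X]
    {α : ℝ} (hα : 0 < α) (T : X →L[ℂ] X) (n : ℕ) :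
    cesaroSum α T n = (cesaroKernel (α + 1) n : ℂ) • cesaroMean α T n := by
  rw [cesaroMean, smul_smul]
  have h : (cesaroKernel (α+1) n : ℂ) ≠ 0 := by
    exact_mod_cast (cesaroKernel_pos (by linarith : (0:ℝ) < α + 1) n).ne'
  rw [mul_inv_cancel₀ h, one_smul]

lemma cesaroSum_inv_conv {X : Type*} [NormedAddCommGroup X] [NormedSpace ℂ X]
    (α : ℝ) (T : X →L[ℂ] X) (r : ℕ) :
    ∑ n ∈ Finset.range (r + 1), (cesaroKernel (-α) (r - n) : ℂ) • cesaroSum α T n = T ^ r := by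
  have expand : ∀ n ∈ Finset.range (r + 1),
      (cesaroKernel (-α) (r - n) : ℂ) • cesaroSum α T n
      = ∑ m ∈ Finset.range (r + 1), (if m ≤ n then
          ((cesaroKernel (-α) (r - n) : ℂ) * (cesaroKernel α (n - m) : ℂ)) • T ^ m else 0) := by
    intro n hn
    rw [cesaroSum, Finset.smul_sum]
    rw [show Finset.range (n+1) = (Finset.range (r+1)).filter (fun m => m ≤ n) by
      ext m
      simp only [Finset.mem_range, Finset.mem_filter, Nat.lt_succ_iff]
      have := Nat.lt_succ_iff.mp (Finset.mem_range.mp hn)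
      omega]
    rw [Finset.sum_filter]
    refine Finset.sum_congr rfl fun m _ => ?_
    split
    · rw [smul_smul]
    · rfl
  rw [Finset.sum_congr rfl expand, Finset.sum_comm]
  have inner : ∀ m ∈ Finset.range (r + 1),
      (∑ n ∈ Finset.range (r + 1), if m ≤ n then
          ((cesaroKernel (-α) (r - n) : ℂ) * (cesaroKernel α (n - m) : ℂ)) • T ^ m else 0)
      = ((cesaroKernel 0 (r - m) : ℝ) : ℂ) • T ^ m := by
    intro m hm
    have hm' : m ≤ r := Nat.lt_succ_iff.mp (Finset.mem_range.mp hm)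
    rw [← Finset.sum_filter]
    rw [show (Finset.range (r+1)).filter (fun n => m ≤ n) = Finset.Ico m (r+1) by
      ext n; simp only [Finset.mem_filter, Finset.mem_range, Finset.mem_Ico, Nat.lt_succ_iff]
      omega]
    rw [Finset.sum_Ico_eq_sum_range]
    have hcong : ∀ s ∈ Finset.range (r + 1 - m),
        ((cesaroKernel (-α) (r - (m + s)) : ℂ) * (cesaroKernel α (m + s - m) : ℂ)) • T ^ m
        = (((cesaroKernel α s * cesaroKernel (-α) ((r - m) - s) : ℝ)) : ℂ) • T ^ m := by
      intro s hs
      congr 1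
      have h1 : m + s - m = s := by omega
      have h2 : r - (m + s) = (r - m) - s := by omega
      rw [h1, h2]
      push_cast
      ring
    rw [Finset.sum_congr rfl hcong, ← Finset.sum_smul]
    congr 1
    have h3 : r + 1 - m = (r - m) + 1 := by omega
    rw [h3]
    rw [show ((cesaroKernel 0 (r-m) : ℝ) : ℂ)
        = ((∑ s ∈ Finset.range ((r-m)+1),
            cesaroKernel α s * cesaroKernel (-α) ((r-m) - s) : ℝ) : ℂ) by
      rw [cesaroKernel_conv α (-α), add_neg_cancel]]
    push_cast
    rfl
  rw [Finset.sum_congr rfl inner]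
  rw [Finset.sum_eq_single_of_mem r (Finset.self_mem_range_succ r)]
  · simp [cesaroKernel_zero]
  · intro m hm hne
    have h : r - m ≠ 0 := by
      have := Nat.lt_succ_iff.mp (Finset.mem_range.mp hm); omega
    rw [cesaroKernel_nat_zero h]
    simp

/-- **Remark 3.3.** Let `α > 0`, `T` a `(C,α)`-bounded operator and `f : ℕ₀ → ℂ`
with `∑_{j≥0} j^α |f(j)| < ∞`.  Then `∑_{j≥0} f(j) T^j` converges in operator
norm, the Weyl differences `W_+^α f(n) = ∑_{j≥n} k^{−α}(j−n) f(j)` converge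
absolutely for every `n ≥ 0`, the series `∑_{n≥0} W_+^α f(n) Δ^{−α}𝒯(n)`
converges in operator norm, and both sums agree. -/
theorem theta_eq_power_series
    {X : Type*} [NormedAddCommGroup X] [NormedSpace ℂ X] [CompleteSpace X]
    (α : ℝ) (hα : 0 < α) (T : X →L[ℂ] X)
    (hT : ∃ C : ℝ, ∀ n : ℕ, ‖cesaroMean α T n‖ ≤ C)
    (f : ℕ → ℂ) (hf : Summable (fun j : ℕ => (j : ℝ) ^ α * ‖f j‖)) :
    (∀ n : ℕ, Summable (fun j : ℕ => ‖(cesaroKernel (-α) j : ℂ) * f (n + j)‖)) ∧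
    ∃ S : X →L[ℂ] X,
      Filter.Tendsto (fun N : ℕ => ∑ j ∈ Finset.range N, f j • T ^ j)
        Filter.atTop (nhds S) ∧
      Filter.Tendsto (fun N : ℕ => ∑ n ∈ Finset.range N,
          (∑' j : ℕ, (cesaroKernel (-α) j : ℂ) * f (n + j)) • cesaroSum α T n)
        Filter.atTop (nhds S) := by
  obtain ⟨C, hC⟩ := hT
  have hC0 : 0 ≤ C := (norm_nonneg _).trans (hC 0)
  set a : ℕ → ℝ := fun j => |cesaroKernel (-α) j| with ha
  have hasum : Summable a := cesaroKernel_neg_summable hα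
  set B : ℝ := ∑' j, a j with hB
  have haB : ∀ j, a j ≤ B := fun j => Summable.le_tsum hasum j (fun i _ => abs_nonneg _)
  -- summability of g m = (m+1)^α |f m|
  set g : ℕ → ℝ := fun m => ((m : ℝ) + 1) ^ α * ‖f m‖ with hg
  have hgnn : ∀ m, 0 ≤ g m := fun m => by
    have : (0:ℝ) ≤ ((m:ℝ)+1)^α := Real.rpow_nonneg (by positivity) α
    exact mul_nonneg this (norm_nonneg _)
  have hgsum : Summable g := by
    rw [← summable_nat_add_iff 1]
    have hcomp : Summable (fun n : ℕ => (2:ℝ)^α * (((n + 1 : ℕ) : ℝ)^α * ‖f (n+1)‖)) :=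
      (((summable_nat_add_iff 1).mpr hf)).mul_left _
    apply Summable.of_nonneg_of_le (fun n => hgnn _) (fun n => ?_) hcomp
    show ((((n+1 : ℕ)):ℝ) + 1) ^ α * ‖f (n+1)‖ ≤ _
    have h1 : (((n+1 : ℕ)):ℝ) + 1 ≤ 2 * ((n + 1 : ℕ) : ℝ) := by push_cast; linarith [Nat.cast_nonneg (α := ℝ) n]
    have h2 : ((((n+1:ℕ)):ℝ) + 1) ^ α ≤ (2 * ((n+1:ℕ):ℝ)) ^ α :=
      Real.rpow_le_rpow (by positivity) h1 hα.le
    have h3 : ((2:ℝ) * ((n+1:ℕ):ℝ)) ^ α = (2:ℝ)^α * ((n+1:ℕ):ℝ)^α :=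
      Real.mul_rpow (by norm_num) (by positivity)
    calc ((((n+1 : ℕ)):ℝ) + 1) ^ α * ‖f (n+1)‖
        ≤ ((2:ℝ)^α * ((n+1:ℕ):ℝ)^α) * ‖f (n+1)‖ := by
          rw [← h3]; exact mul_le_mul_of_nonneg_right h2 (norm_nonneg _)
      _ = (2:ℝ)^α * (((n+1:ℕ):ℝ)^α * ‖f (n+1)‖) := by ring
  have habsf : Summable (fun m : ℕ => ‖f m‖) := by
    apply Summable.of_nonneg_of_le (fun m => norm_nonneg _) (fun m => ?_) hgsum
    have h1 : (1:ℝ) ≤ ((m:ℝ)+1)^α :=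
      Real.one_le_rpow (by linarith [Nat.cast_nonneg (α := ℝ) m]) hα.le
    show ‖f m‖ ≤ ((m:ℝ)+1)^α * ‖f m‖
    nlinarith [norm_nonneg (f m)]
  -- part 1
  have part1 : ∀ n : ℕ, Summable (fun j : ℕ => ‖(cesaroKernel (-α) j : ℂ) * f (n + j)‖) := by
    intro n
    have habseq : ∀ j, ‖(cesaroKernel (-α) j : ℂ) * f (n + j)‖
        = a j * ‖f (n + j)‖ := fun j => by
      rw [norm_mul, Complex.norm_real, Real.norm_eq_abs]
    have hshift : Summable (fun j : ℕ => ‖f (n + j)‖) := by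
      have := habsf.comp_injective (add_right_injective n)
      exact this
    simp only [habseq]
    apply Summable.of_nonneg_of_le
      (fun j => mul_nonneg (abs_nonneg _) (norm_nonneg _))
      (fun j => mul_le_mul_of_nonneg_right (haB j) (norm_nonneg _))
      (hshift.mul_left B)
  -- norm bounds
  have hCS : ∀ n, ‖cesaroSum α T n‖ ≤ C * cesaroKernel (α + 1) n := by
    intro n
    have hk : 0 < cesaroKernel (α+1) n := cesaroKernel_pos (by linarith) n
    calc ‖cesaroSum α T n‖
        = ‖((cesaroKernel (α+1) n : ℝ) : ℂ)‖ * ‖cesaroMean α T n‖ := by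
          rw [cesaroSum_eq_smul_mean hα]
          exact norm_smul ((cesaroKernel (α+1) n : ℝ) : ℂ) (cesaroMean α T n)
      _ = cesaroKernel (α+1) n * ‖cesaroMean α T n‖ := by
          rw [Complex.norm_real, Real.norm_eq_abs, abs_of_pos hk]
      _ ≤ cesaroKernel (α+1) n * C := mul_le_mul_of_nonneg_left (hC n) hk.le
      _ = C * cesaroKernel (α+1) n := mul_comm _ _
  have hCS' : ∀ n : ℕ, ‖cesaroSum α T n‖ ≤ C * Real.exp α * ((n:ℝ)+1)^α := by
    intro n
    refine (hCS n).trans ?_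
    rw [mul_assoc]
    exact mul_le_mul_of_nonneg_left (cesaroKernel_le hα n) hC0
  -- double sum family
  set P : ℕ × ℕ → (X →L[ℂ] X) := fun p =>
    ((cesaroKernel (-α) p.2 : ℂ) * f (p.1 + p.2)) • cesaroSum α T p.1 with hP
  have hPnorm : ∀ p : ℕ × ℕ, ‖P p‖ ≤ (C * Real.exp α) * (a p.2 * g (p.1 + p.2)) := by
    rintro ⟨n, j⟩
    have hns : ‖P (n, j)‖
        = |cesaroKernel (-α) j| * ‖f (n+j)‖ * ‖cesaroSum α T n‖ := by
      rw [hP]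
      dsimp only
      rw [show ‖((cesaroKernel (-α) j : ℂ) * f (n + j)) • cesaroSum α T n‖
          = ‖((cesaroKernel (-α) j : ℂ) * f (n + j))‖ * ‖cesaroSum α T n‖ from norm_smul ((cesaroKernel (-α) j : ℂ) * f (n + j)) (cesaroSum α T n),
        norm_mul, Complex.norm_real, Real.norm_eq_abs]
    rw [hns]
    have hmon : ((n:ℝ)+1)^α ≤ ((↑(n+j):ℝ)+1)^α := by
      apply Real.rpow_le_rpow (by positivity) (by push_cast; linarith [Nat.cast_nonneg (α := ℝ) j]) hα.le
    calc |cesaroKernel (-α) j| * ‖f (n+j)‖ * ‖cesaroSum α T n‖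
        ≤ |cesaroKernel (-α) j| * ‖f (n+j)‖ * (C * Real.exp α * ((↑(n+j):ℝ)+1)^α) := by
          apply mul_le_mul_of_nonneg_left ((hCS' n).trans ?_)
            (mul_nonneg (abs_nonneg _) (norm_nonneg _))
          exact mul_le_mul_of_nonneg_left hmon (by positivity)
      _ = (C * Real.exp α) * (a j * g (n + j)) := by rw [hg]; dsimp only; ring
  have hH : Summable (fun q : ℕ × ℕ => a q.1 * g q.2) :=
    hasum.mul_of_nonneg hgsum (fun j => abs_nonneg _) (fun m => hgnn m)
  have hdom : Summable (fun p : ℕ × ℕ => (C * Real.exp α) * (a p.2 * g (p.1 + p.2))) := by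
    apply Summable.mul_left
    have hinj : Function.Injective (fun p : ℕ × ℕ => ((p.2, p.1 + p.2) : ℕ × ℕ)) := by
      intro p q h
      have h1 : p.2 = q.2 := congrArg Prod.fst h
      have h2 : p.1 + p.2 = q.1 + q.2 := congrArg Prod.snd h
      exact Prod.ext_iff.mpr ⟨by omega, h1⟩
    have := hH.comp_injective hinj
    exact this
  have hPsum : Summable P := Summable.of_norm_bounded hdom hPnorm
  set S : X →L[ℂ] X := ∑' p, P p with hS
  -- step A : power series
  set ψ : ℕ × ℕ → ℕ × ℕ := fun p => (p.1 + p.2, p.1) with hψ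
  have hψinj : Function.Injective ψ := by
    intro p q h
    have h1 : p.1 = q.1 := congrArg Prod.snd h
    have h2 : p.1 + p.2 = q.1 + q.2 := congrArg Prod.fst h
    exact Prod.ext_iff.mpr ⟨h1, by omega⟩
  set Q : ℕ × ℕ → (X →L[ℂ] X) := fun q => if q.2 ≤ q.1 then
      ((cesaroKernel (-α) (q.1 - q.2) : ℂ) * f q.1) • cesaroSum α T q.2 else 0 with hQ
  have hQψ : ∀ p, Q (ψ p) = P p := by
    rintro ⟨n, j⟩
    rw [hQ, hψ, hP]
    dsimp only
    rw [if_pos (by omega : n ≤ n + j), show n + j - n = j from by omega]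
  have hQ0 : ∀ q ∉ Set.range ψ, Q q = 0 := by
    rintro ⟨r, n⟩ hq
    rw [hQ]
    dsimp only
    rw [if_neg]
    intro hle
    exact hq ⟨(n, r - n), Prod.ext_iff.mpr ⟨by show n + (r - n) = r; omega, rfl⟩⟩
  have hQsum : Summable Q := by
    rw [← Function.Injective.summable_iff hψinj hQ0]
    have : Q ∘ ψ = P := funext hQψ
    rw [this]
    exact hPsum
  have hQtsum : ∑' q, Q q = S := by
    have hsupp : Function.support Q ⊆ Set.range ψ := by
      intro q hq
      by_contra h
      exact hq (hQ0 q h)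
    rw [← Function.Injective.tsum_eq hψinj hsupp, hS]
    exact tsum_congr hQψ
  have hA : HasSum (fun r : ℕ => f r • T ^ r) S := by
    have h1 : HasSum (fun r : ℕ => ∑' n : ℕ, Q (r, n)) (∑' q, Q q) :=
      hQsum.hasSum.prod_fiberwise (fun r => (hQsum.prod_factor r).hasSum)
    rw [hQtsum] at h1
    have heq : (fun r : ℕ => ∑' n : ℕ, Q (r, n)) = fun r : ℕ => f r • T ^ r := by
        funext r
        have hz : ∀ n ∉ Finset.range (r + 1), Q (r, n) = 0 := by
          intro n hn
          have : ¬ n ≤ r := fun hle => hn (Finset.mem_range.mpr (Nat.lt_succ_of_le hle))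
          rw [hQ]
          dsimp only
          rw [if_neg this]
        rw [tsum_eq_sum hz]
        have hc : ∀ n ∈ Finset.range (r + 1),
            Q (r, n) = f r • ((cesaroKernel (-α) (r - n) : ℂ) • cesaroSum α T n) := by
          intro n hn
          have hn' : n ≤ r := Nat.lt_succ_iff.mp (Finset.mem_range.mp hn)
          rw [hQ]
          dsimp only
          rw [if_pos hn', mul_comm]
          exact (smul_smul (f r) ((cesaroKernel (-α) (r - n) : ℂ)) (cesaroSum α T n)).symm
        rw [Finset.sum_congr rfl hc, ← Finset.smul_sum, cesaroSum_inv_conv]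
    rw [heq] at h1
    exact h1
  have hB2 : HasSum (fun n : ℕ =>
      (∑' j : ℕ, (cesaroKernel (-α) j : ℂ) * f (n + j)) • cesaroSum α T n) S := by
    have h1 : HasSum (fun n : ℕ => ∑' j : ℕ, P (n, j)) S :=
      hPsum.hasSum.prod_fiberwise (fun n => (hPsum.prod_factor n).hasSum)
    have heq : (fun n : ℕ => ∑' j : ℕ, P (n, j))
        = fun n : ℕ => (∑' j : ℕ, (cesaroKernel (-α) j : ℂ) * f (n + j)) • cesaroSum α T n := by
        funext n
        have hcsum : Summable (fun j : ℕ => (cesaroKernel (-α) j : ℂ) * f (n + j)) := by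
          apply Summable.of_norm
          exact part1 n
        rw [← Summable.tsum_smul_const hcsum]
    rw [heq] at h1
    exact h1
  exact ⟨part1, S, hA.tendsto_sum_nat, hB2.tendsto_sum_nat⟩
end
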